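/- Let (A⊗V,μ_{A⊗V}) and (A⊗W,μ_{A⊗W}) be weak crossed products with preunits ν_V and ν_W, and let γ:V→A⊗W, θ:W→A⊗V be morphisms satisfying θ=∇_{A⊗V}∘θ and ψ_W=(μ_A⊗W)∘(μ_A⊗γ)∘(A⊗ψ_V)∘(θ⊗A). Then (μ_A⊗W)∘(A⊗γ)∘θ=∇_{A⊗W}∘(η_A⊗W). If moreover ν_V=(μ_A⊗V)∘(A⊗θ)∘ν_W, then ν_W=(μ_A⊗W)∘(A⊗γ)∘ν_V. -/

import Mathlib

open CategoryTheory MonoidalCategory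

universe v u

namespace WeakCrossed

variable {C : Type u} [Category.{v} C] [MonoidalCategory C]

/-- The monoid axioms for a triple `(A, η, μ)` in a monoidal category. -/
def IsMon (A : C) (eta : 𝟙_ C ⟶ A) (mu : A ⊗ A ⟶ A) : Prop :=
  (eta ▷ A) ≫ mu = (λ_ A).hom ∧ (A ◁ eta) ≫ mu = (ρ_ A).hom ∧
    (mu ▷ A) ≫ mu = (α_ A A A).hom ≫ (A ◁ mu) ≫ mu

/-- The morphism `(μ_A ⊗ Y) ∘ (A ⊗ f) : (A ⊗ X) ⊗ Z ⟶ A ⊗ Y` for `f : X ⊗ Z ⟶ A ⊗ Y`. -/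
def phi (A : C) {X Z Y : C} (mu : A ⊗ A ⟶ A) (f : X ⊗ Z ⟶ A ⊗ Y) :
    (A ⊗ X) ⊗ Z ⟶ A ⊗ Y :=
  (α_ A X Z).hom ≫ (A ◁ f) ≫ (α_ A A Y).inv ≫ (mu ▷ Y)

/-- The measuring condition `(μ_A ⊗ V) ∘ (A ⊗ ψ) ∘ (ψ ⊗ A) = ψ ∘ (V ⊗ μ_A)`. -/
def Measuring (A V : C) (mu : A ⊗ A ⟶ A) (psi : V ⊗ A ⟶ A ⊗ V) : Prop :=
  (psi ▷ A) ≫ phi A mu psi = (α_ V A A).hom ≫ (V ◁ mu) ≫ psi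

/-- The idempotent `∇_{A⊗V} = (μ_A ⊗ V) ∘ (A ⊗ ψ) ∘ (A ⊗ V ⊗ η_A)`. -/
def nabla (A V : C) (eta : 𝟙_ C ⟶ A) (mu : A ⊗ A ⟶ A) (psi : V ⊗ A ⟶ A ⊗ V) :
    A ⊗ V ⟶ A ⊗ V :=
  (ρ_ (A ⊗ V)).inv ≫ ((A ⊗ V) ◁ eta) ≫ phi A mu psi

/-- The twisted condition
`(μ_A ⊗ V) ∘ (A ⊗ ψ) ∘ (σ ⊗ A) = (μ_A ⊗ V) ∘ (A ⊗ σ) ∘ (ψ ⊗ V) ∘ (V ⊗ ψ)`. -/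
def Twisted (A V : C) (mu : A ⊗ A ⟶ A) (psi : V ⊗ A ⟶ A ⊗ V)
    (sig : V ⊗ V ⟶ A ⊗ V) : Prop :=
  (sig ▷ A) ≫ phi A mu psi =
    (α_ V V A).hom ≫ (V ◁ psi) ≫ (α_ V A V).inv ≫ (psi ▷ V) ≫ phi A mu sig

/-- The cocycle condition
`(μ_A ⊗ V) ∘ (A ⊗ σ) ∘ (σ ⊗ V) = (μ_A ⊗ V) ∘ (A ⊗ σ) ∘ (ψ ⊗ V) ∘ (V ⊗ σ)`. -/
def Cocycle (A V : C) (mu : A ⊗ A ⟶ A) (psi : V ⊗ A ⟶ A ⊗ V)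
    (sig : V ⊗ V ⟶ A ⊗ V) : Prop :=
  (sig ▷ V) ≫ phi A mu sig =
    (α_ V V V).hom ≫ (V ◁ sig) ≫ (α_ V A V).inv ≫ (psi ▷ V) ≫ phi A mu sig

/-- The weak crossed product multiplication
`μ_{A⊗V} = (μ_A ⊗ V) ∘ (μ_A ⊗ σ) ∘ (A ⊗ ψ ⊗ V)`. -/
def prodAV (A V : C) (mu : A ⊗ A ⟶ A) (psi : V ⊗ A ⟶ A ⊗ V)
    (sig : V ⊗ V ⟶ A ⊗ V) : (A ⊗ V) ⊗ (A ⊗ V) ⟶ A ⊗ V :=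
  (α_ A V (A ⊗ V)).hom ≫ (A ◁ ((α_ V A V).inv ≫ (psi ▷ V) ≫ (α_ A V V).hom)) ≫
    (α_ A A (V ⊗ V)).inv ≫ (mu ⊗ₘ sig) ≫ (α_ A A V).inv ≫ (mu ▷ V)

/-- The morphism `η_A ⊗ V : V ⟶ A ⊗ V`. -/
def etaT (A V : C) (eta : 𝟙_ C ⟶ A) : V ⟶ A ⊗ V := (λ_ V).inv ≫ (eta ▷ V)

/-- The morphism `β_ν = (μ_A ⊗ V) ∘ (A ⊗ ν) : A ⟶ A ⊗ V`. -/
def beta (A V : C) (mu : A ⊗ A ⟶ A) (nu : 𝟙_ C ⟶ A ⊗ V) : A ⟶ A ⊗ V :=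
  (ρ_ A).inv ≫ (A ◁ nu) ≫ (α_ A A V).inv ≫ (mu ▷ V)

/-- Preunit condition (pre1):
`(μ_A ⊗ V) ∘ (A ⊗ σ) ∘ (ψ ⊗ V) ∘ (V ⊗ ν) = ∇_{A⊗V} ∘ (η_A ⊗ V)`. -/
def Pre1 (A V : C) (eta : 𝟙_ C ⟶ A) (mu : A ⊗ A ⟶ A) (psi : V ⊗ A ⟶ A ⊗ V)
    (sig : V ⊗ V ⟶ A ⊗ V) (nu : 𝟙_ C ⟶ A ⊗ V) : Prop :=
  (ρ_ V).inv ≫ (V ◁ nu) ≫ (α_ V A V).inv ≫ (psi ▷ V) ≫ phi A mu sig =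
    etaT A V eta ≫ nabla A V eta mu psi

/-- Preunit condition (pre2):
`(μ_A ⊗ V) ∘ (A ⊗ σ) ∘ (ν ⊗ V) = ∇_{A⊗V} ∘ (η_A ⊗ V)`. -/
def Pre2 (A V : C) (eta : 𝟙_ C ⟶ A) (mu : A ⊗ A ⟶ A) (psi : V ⊗ A ⟶ A ⊗ V)
    (sig : V ⊗ V ⟶ A ⊗ V) (nu : 𝟙_ C ⟶ A ⊗ V) : Prop :=
  (λ_ V).inv ≫ (nu ▷ V) ≫ phi A mu sig = etaT A V eta ≫ nabla A V eta mu psi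

/-- Preunit condition (pre3): `(μ_A ⊗ V) ∘ (A ⊗ ψ) ∘ (ν ⊗ A) = β_ν`. -/
def Pre3 (A V : C) (mu : A ⊗ A ⟶ A) (psi : V ⊗ A ⟶ A ⊗ V)
    (nu : 𝟙_ C ⟶ A ⊗ V) : Prop :=
  (λ_ A).inv ≫ (nu ▷ A) ≫ phi A mu psi = beta A V mu nu

/-- `(A ⊗ V, μ_{A⊗V})` is a weak crossed product: measuring, twisted and cocycle
conditions hold and `∇_{A⊗V} ∘ σ = σ`. -/
def WCP (A V : C) (eta : 𝟙_ C ⟶ A) (mu : A ⊗ A ⟶ A) (psi : V ⊗ A ⟶ A ⊗ V)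
    (sig : V ⊗ V ⟶ A ⊗ V) : Prop :=
  Measuring A V mu psi ∧ Twisted A V mu psi sig ∧ Cocycle A V mu psi sig ∧
    sig ≫ nabla A V eta mu psi = sig

/-- `(A ⊗ V, μ_{A⊗V})` is a weak crossed product with preunit `ν`. -/
def WCPpre (A V : C) (eta : 𝟙_ C ⟶ A) (mu : A ⊗ A ⟶ A) (psi : V ⊗ A ⟶ A ⊗ V)
    (sig : V ⊗ V ⟶ A ⊗ V) (nu : 𝟙_ C ⟶ A ⊗ V) : Prop :=
  WCP A V eta mu psi sig ∧ Pre1 A V eta mu psi sig nu ∧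
    Pre2 A V eta mu psi sig nu ∧ Pre3 A V mu psi nu

/-- `(μ_A ⊗ Y) ∘ (A ⊗ γ) : A ⊗ X ⟶ A ⊗ Y` for `γ : X ⟶ A ⊗ Y`. -/
def tmap (A : C) {X Y : C} (mu : A ⊗ A ⟶ A) (g : X ⟶ A ⊗ Y) : A ⊗ X ⟶ A ⊗ Y :=
  (A ◁ g) ≫ (α_ A A Y).inv ≫ (mu ▷ Y)

/-- Left `A`-linearity of `T : A ⊗ X ⟶ A ⊗ Y`:
`T ∘ (μ_A ⊗ X) = (μ_A ⊗ Y) ∘ (A ⊗ T)`. -/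
def LeftLin (A : C) {X Y : C} (mu : A ⊗ A ⟶ A) (T : A ⊗ X ⟶ A ⊗ Y) : Prop :=
  (mu ▷ X) ≫ T = (α_ A A X).hom ≫ (A ◁ T) ≫ (α_ A A Y).inv ≫ (mu ▷ Y)

/-- `ν` is a preunit for the associative product `m` on `X`. -/
def IsPreunit {X : C} (m : X ⊗ X ⟶ X) (nu : 𝟙_ C ⟶ X) : Prop :=
  (ρ_ X).inv ≫ (X ◁ nu) ≫ m = (λ_ X).inv ≫ (nu ▷ X) ≫ m ∧
  (ρ_ X).inv ≫ (X ◁ nu) ≫ m =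
    (ρ_ X).inv ≫ (X ◁ ((λ_ (𝟙_ C)).inv ≫ (nu ⊗ₘ nu) ≫ m)) ≫ m

/-- Brzeziński normalization conditions: `ψ ∘ (η_V ⊗ A) = A ⊗ η_V`,
`ψ ∘ (V ⊗ η_A) = η_A ⊗ V`, `σ ∘ (η_V ⊗ V) = σ ∘ (V ⊗ η_V) = η_A ⊗ V`. -/
def BrzNorm (A V : C) (eta : 𝟙_ C ⟶ A) (etaV : 𝟙_ C ⟶ V) (psi : V ⊗ A ⟶ A ⊗ V)
    (sig : V ⊗ V ⟶ A ⊗ V) : Prop :=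
  (λ_ A).inv ≫ (etaV ▷ A) ≫ psi = (ρ_ A).inv ≫ (A ◁ etaV) ∧
  (ρ_ V).inv ≫ (V ◁ eta) ≫ psi = (λ_ V).inv ≫ (eta ▷ V) ∧
  (λ_ V).inv ≫ (etaV ▷ V) ≫ sig = (λ_ V).inv ≫ (eta ▷ V) ∧
  (ρ_ V).inv ≫ (V ◁ etaV) ≫ sig = (λ_ V).inv ≫ (eta ▷ V)

/-!
The relation `ψ_W = (μ_A ⊗ W) ∘ (μ_A ⊗ γ) ∘ (A ⊗ ψ_V) ∘ (θ ⊗ A)`, evaluated at `η_A`, reads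
`ψ_W ∘ (W ⊗ η_A) = (μ_A ⊗ W) ∘ (A ⊗ γ) ∘ ∇_{A⊗V} ∘ θ`, and the left side is `∇_{A⊗W} ∘ (η_A ⊗ W)`
by the unit law; since `θ` is fixed by `∇_{A⊗V}`, this is the first claim. For the second,
`(μ_A ⊗ W) ∘ (A ⊗ -)` turns composition of morphisms `X ⟶ A ⊗ Y` into composition of
left `A`-linear maps, so `ν_V = (μ_A ⊗ V) ∘ (A ⊗ θ) ∘ ν_W` gives
`(μ_A ⊗ W) ∘ (A ⊗ γ) ∘ ν_V = ∇_{A⊗W} ∘ ν_W`, and the preunit condition (pre3) at `η_A` shows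
that `ν_W` is fixed by `∇_{A⊗W}`.
-/

section

variable (A : C) (eta : 𝟙_ C ⟶ A) (mu : A ⊗ A ⟶ A)

lemma tmap_comp_tmap (hassoc : (mu ▷ A) ≫ mu = (α_ A A A).hom ≫ (A ◁ mu) ≫ mu)
    {X Y Z : C} (f : X ⟶ A ⊗ Y) (g : Y ⟶ A ⊗ Z) :
    tmap A mu f ≫ tmap A mu g = tmap A mu (f ≫ tmap A mu g) := by
  unfold tmap
  simp only [Category.assoc, MonoidalCategory.whiskerLeft_comp]
  rw [← whisker_exchange_assoc, associator_inv_naturality_left_assoc,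
    associator_inv_naturality_middle_assoc, ← comp_whiskerRight (mu ▷ A) mu, hassoc]
  simp only [comp_whiskerRight]
  monoidal

lemma nabla_eq_tmap {X : C} (psi : X ⊗ A ⟶ A ⊗ X) :
    nabla A X eta mu psi = tmap A mu ((ρ_ X).inv ≫ (X ◁ eta) ≫ psi) := by
  unfold nabla phi tmap
  simp only [MonoidalCategory.whiskerLeft_comp, Category.assoc]
  monoidal

variable {A eta mu}

lemma etaT_comp_nabla (hl : (eta ▷ A) ≫ mu = (λ_ A).hom) {X : C} (psi : X ⊗ A ⟶ A ⊗ X) :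
    etaT A X eta ≫ nabla A X eta mu psi = (ρ_ X).inv ≫ (X ◁ eta) ≫ psi := by
  unfold etaT nabla phi
  rw [rightUnitor_inv_naturality_assoc, ← whisker_exchange_assoc]
  simp only [comp_whiskerRight, Category.assoc]
  rw [associator_naturality_left_assoc, ← whisker_exchange_assoc,
    associator_inv_naturality_left_assoc, ← comp_whiskerRight (eta ▷ A) mu, hl]
  monoidal

lemma tmap_etaT_comp_nabla (hl : (eta ▷ A) ≫ mu = (λ_ A).hom) {X : C}
    (psi : X ⊗ A ⟶ A ⊗ X) :
    tmap A mu (etaT A X eta ≫ nabla A X eta mu psi) = nabla A X eta mu psi := by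
  rw [etaT_comp_nabla hl, nabla_eq_tmap]

lemma comp_nabla_of_pre3 (hl : (eta ▷ A) ≫ mu = (λ_ A).hom) {X : C}
    {psi : X ⊗ A ⟶ A ⊗ X} {nu : 𝟙_ C ⟶ A ⊗ X} (pre3 : Pre3 A X mu psi nu) :
    nu ≫ nabla A X eta mu psi = nu := by
  have h := eta ≫= pre3
  unfold beta at h
  rw [rightUnitor_inv_naturality_assoc, ← whisker_exchange_assoc,
    associator_inv_naturality_left_assoc, ← comp_whiskerRight (eta ▷ A) mu, hl,
    leftUnitor_inv_naturality_assoc, whisker_exchange_assoc, unitors_inv_equal,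
    ← rightUnitor_inv_naturality_assoc] at h
  simp only [nabla]
  rw [h]
  monoidal

lemma whiskerLeft_eta_comp_eq_of_psi_eq {V W : C} (psiV : V ⊗ A ⟶ A ⊗ V)
    {psiW : W ⊗ A ⟶ A ⊗ W} (g : V ⟶ A ⊗ W) (th : W ⟶ A ⊗ V)
    (hpsi : psiW = (th ▷ A) ≫ (α_ A V A).hom ≫ (A ◁ psiV) ≫ (α_ A A V).inv ≫
      (mu ⊗ₘ g) ≫ (α_ A A W).inv ≫ (mu ▷ W)) :
    (ρ_ W).inv ≫ (W ◁ eta) ≫ psiW = th ≫ nabla A V eta mu psiV ≫ tmap A mu g := by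
  rw [hpsi, whisker_exchange_assoc, ← rightUnitor_inv_naturality_assoc, tensorHom_def mu g]
  simp only [nabla, phi, tmap, Category.assoc]

end

theorem gamma_theta_aux_general (A V W : C) (eta : 𝟙_ C ⟶ A) (mu : A ⊗ A ⟶ A)
    (hA : IsMon A eta mu)
    (psiV : V ⊗ A ⟶ A ⊗ V) (nuV : 𝟙_ C ⟶ A ⊗ V)
    (psiW : W ⊗ A ⟶ A ⊗ W) (sigW : W ⊗ W ⟶ A ⊗ W) (nuW : 𝟙_ C ⟶ A ⊗ W)
    (hW : WCPpre A W eta mu psiW sigW nuW)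
    (g : V ⟶ A ⊗ W) (th : W ⟶ A ⊗ V)
    (h2 : th = th ≫ nabla A V eta mu psiV)
    (h3 : psiW = (th ▷ A) ≫ (α_ A V A).hom ≫ (A ◁ psiV) ≫ (α_ A A V).inv ≫
      (mu ⊗ₘ g) ≫ (α_ A A W).inv ≫ (mu ▷ W)) :
    th ≫ tmap A mu g = etaT A W eta ≫ nabla A W eta mu psiW ∧
    (nuV = nuW ≫ tmap A mu th → nuW = nuV ≫ tmap A mu g) := by
  obtain ⟨hl, -, hassoc⟩ := hA
  have hthg : th ≫ tmap A mu g = etaT A W eta ≫ nabla A W eta mu psiW := by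
    rw [etaT_comp_nabla hl, whiskerLeft_eta_comp_eq_of_psi_eq psiV g th h3,
      ← Category.assoc, ← h2]
  refine ⟨hthg, fun hnu => ?_⟩
  rw [hnu, Category.assoc, tmap_comp_tmap A mu hassoc, hthg, tmap_etaT_comp_nabla hl,
    comp_nabla_of_pre3 hl hW.2.2.2]

/-- if `θ = ∇_{A⊗V}∘θ` and `ψ_W` is induced by `γ`, `θ`, then
`(μ_A⊗W)∘(A⊗γ)∘θ = ∇_{A⊗W}∘(η_A⊗W)`; and if moreover
`ν_V = (μ_A⊗V)∘(A⊗θ)∘ν_W` then `ν_W = (μ_A⊗W)∘(A⊗γ)∘ν_V`. -/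
theorem gamma_theta_aux (A V W : C) (eta : 𝟙_ C ⟶ A) (mu : A ⊗ A ⟶ A)
    (hA : IsMon A eta mu)
    (psiV : V ⊗ A ⟶ A ⊗ V) (sigV : V ⊗ V ⟶ A ⊗ V) (nuV : 𝟙_ C ⟶ A ⊗ V)
    (psiW : W ⊗ A ⟶ A ⊗ W) (sigW : W ⊗ W ⟶ A ⊗ W) (nuW : 𝟙_ C ⟶ A ⊗ W)
    (hV : WCPpre A V eta mu psiV sigV nuV) (hW : WCPpre A W eta mu psiW sigW nuW)
    (g : V ⟶ A ⊗ W) (th : W ⟶ A ⊗ V)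
    (h2 : th = th ≫ nabla A V eta mu psiV)
    (h3 : psiW = (th ▷ A) ≫ (α_ A V A).hom ≫ (A ◁ psiV) ≫ (α_ A A V).inv ≫
      (mu ⊗ₘ g) ≫ (α_ A A W).inv ≫ (mu ▷ W)) :
    th ≫ tmap A mu g = etaT A W eta ≫ nabla A W eta mu psiW ∧
    (nuV = nuW ≫ tmap A mu th → nuW = nuV ≫ tmap A mu g) :=
  gamma_theta_aux_general A V W eta mu hA psiV nuV psiW sigW nuW hW g th h2 h3

end WeakCrossed
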